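/- For every real $M \geq 0$, $\inf_{a\in\mathbb{R}}\Big[|1+a| + \sqrt{(1+a)^2 + M a^2}\Big] = \sqrt{M}$ if $0 \leq M \leq 1$, and $= \frac{2M}{M+1}$ if $M > 1$. -/
import Mathlib

private lemma aux_le_of_sq (s q : ℝ) (hs : 0 ≤ s) (h : q ^ 2 ≤ s ^ 2) : q ≤ s := by
  nlinarith [sq_nonneg (s - q), sq_nonneg (s + q)]

theorem sInf_abs_min_problem (M : ℝ) (hM : 0 ≤ M) :
    (M ≤ 1 →
      sInf (Set.range fun a : ℝ => |1 + a| + Real.sqrt ((1 + a) ^ 2 + M * a ^ 2)) =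
        Real.sqrt M) ∧
    (1 < M →
      sInf (Set.range fun a : ℝ => |1 + a| + Real.sqrt ((1 + a) ^ 2 + M * a ^ 2)) =
        2 * M / (M + 1)) := by
  constructor
  · intro hM1
    have lb : ∀ a : ℝ, Real.sqrt M ≤ |1 + a| + Real.sqrt ((1 + a) ^ 2 + M * a ^ 2) := by
      intro a
      set s := Real.sqrt ((1 + a) ^ 2 + M * a ^ 2) with hsdef
      have hs0 : 0 ≤ s := Real.sqrt_nonneg _
      have hs2 : s ^ 2 = (1 + a) ^ 2 + M * a ^ 2 :=
        Real.sq_sqrt (by positivity)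
      set m := Real.sqrt M with hmdef
      have hm0 : 0 ≤ m := Real.sqrt_nonneg _
      have hm2 : m ^ 2 = M := Real.sq_sqrt hM
      have hm1 : m ≤ 1 := Real.sqrt_le_one.mpr hM1
      have hkey : m * |a| ≤ s := by
        apply aux_le_of_sq _ _ hs0
        have : (m * |a|) ^ 2 = M * a ^ 2 := by
          rw [mul_pow, hm2, sq_abs]
        nlinarith [sq_nonneg (1 + a)]
      have htri : 1 ≤ |1 + a| + |a| := by
        have := abs_sub_abs_le_abs_sub (1 + a) a
        simp at this
        nlinarith [abs_nonneg (1 + a), abs_nonneg a, le_abs_self (1 + a),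
          neg_abs_le (1 + a), le_abs_self a, neg_abs_le a, abs_nonneg (1 + a)]
      nlinarith [abs_nonneg (1 + a), abs_nonneg a]
    apply le_antisymm
    · apply csInf_le ⟨Real.sqrt M, by rintro x ⟨a, rfl⟩; exact lb a⟩
      refine ⟨-1, ?_⟩
      norm_num
    · exact le_csInf ⟨_, ⟨0, rfl⟩⟩ (by rintro x ⟨a, rfl⟩; exact lb a)
  · intro hM1
    have hM1' : (0 : ℝ) < M + 1 := by linarith
    have lb : ∀ a : ℝ, 2 * M / (M + 1) ≤ |1 + a| + Real.sqrt ((1 + a) ^ 2 + M * a ^ 2) := by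
      intro a
      set s := Real.sqrt ((1 + a) ^ 2 + M * a ^ 2) with hsdef
      have hs0 : 0 ≤ s := Real.sqrt_nonneg _
      have hs2 : s ^ 2 = (1 + a) ^ 2 + M * a ^ 2 :=
        Real.sq_sqrt (by positivity)
      rw [div_le_iff₀ hM1']
      have habs : 1 + a ≤ |1 + a| := le_abs_self _
      have hkey : (M - 1) * (1 + a) - 2 * M * a ≤ (M + 1) * s := by
        apply aux_le_of_sq _ _ (mul_nonneg hM1'.le hs0)
        have : ((M + 1) * s) ^ 2 = (M + 1) ^ 2 * ((1 + a) ^ 2 + M * a ^ 2) := by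
          rw [mul_pow, hs2]
        nlinarith [mul_nonneg hM (sq_nonneg (2 + (M + 1) * a))]
      nlinarith [mul_le_mul_of_nonneg_right habs hM1'.le]
    apply le_antisymm
    · apply csInf_le ⟨2 * M / (M + 1), by rintro x ⟨a, rfl⟩; exact lb a⟩
      refine ⟨-2 / (M + 1), ?_⟩
      have h1 : 1 + (-2 / (M + 1)) = (M - 1) / (M + 1) := by field_simp; ring
      have h2 : (1 + (-2 / (M + 1))) ^ 2 + M * (-2 / (M + 1)) ^ 2 = 1 := by
        field_simp
        ring
      show |1 + -2 / (M + 1)| +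
        Real.sqrt ((1 + -2 / (M + 1)) ^ 2 + M * (-2 / (M + 1)) ^ 2) = 2 * M / (M + 1)
      rw [h2, Real.sqrt_one, h1,
        abs_of_nonneg (div_nonneg (by linarith) hM1'.le)]
      field_simp
      ring
    · exact le_csInf ⟨_, ⟨0, rfl⟩⟩ (by rintro x ⟨a, rfl⟩; exact lb a)
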